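/- Let 𝓕₁ and 𝓕₂ be finite sets of marked graphs and, for i ∈ {1,2}, let 𝓟ᵢ be the class of graphs that are F-free for every F ∈ 𝓕ᵢ. Then there exists a finite set 𝓕 of marked graphs such that the class of graphs that are F-free for every F ∈ 𝓕 equals 𝓟₁ ∪ 𝓟₂. -/

import Mathlib

/-- The set of vertices at distance at most `r` from `v` in `G`. -/
def ballSet {V : Type*} (G : SimpleGraph V) (r : ℕ) (v : V) : Set V :=
  {u | G.dist v u ≤ r}

lemma center_mem_ballSet {V : Type*} (G : SimpleGraph V) (r : ℕ) (v : V) :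
    v ∈ ballSet G r v := by
  simp [ballSet, SimpleGraph.dist_self]

/-- The `r`-ball of `v` in `G`: the subgraph induced on the vertices at
distance at most `r` from `v`. -/
def ballGraph {V : Type*} (G : SimpleGraph V) (r : ℕ) (v : V) :
    SimpleGraph (ballSet G r v) :=
  G.induce (ballSet G r v)

/-- Isomorphism of pointed graphs. -/
def PtdIso {V W : Type*} (G : SimpleGraph V) (v : V) (H : SimpleGraph W) (w : W) : Prop :=
  ∃ e : G ≃g H, e v = w

/-- The `r`-ball of `v` in `G` has the `r`-type represented by the pointed graph `(H, c)`. -/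
def BallType {V W : Type*} (G : SimpleGraph V) (r : ℕ) (v : V)
    (H : SimpleGraph W) (c : W) : Prop :=
  PtdIso (ballGraph G r v) ⟨v, center_mem_ballSet G r v⟩ H c

/-- Vertex markings of a marked graph. -/
inductive Mark where
  | full
  | semifull
  | part
deriving DecidableEq

/-- A marked graph: a graph together with a marking of each vertex as
'full', 'semifull' or 'partial'. -/
structure MarkedGraph (V : Type*) where
  graph : SimpleGraph V
  mark : V → Mark

/-- The closed neighbourhood `N₁(v) = {v} ∪ N(v)`. -/
def closedNbhd {V : Type*} (G : SimpleGraph V) (v : V) : Set V :=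
  insert v (G.neighborSet v)

/-- An embedding of a marked graph `F` into a graph `G` (Definition 2.1). -/
def IsMarkedEmbedding {V W : Type*} (F : MarkedGraph V) (G : SimpleGraph W)
    (f : V → W) : Prop :=
  Function.Injective f ∧ ∀ v : V,
    (F.mark v = Mark.full → closedNbhd G (f v) = f '' closedNbhd F.graph v) ∧
    (F.mark v = Mark.semifull →
      closedNbhd G (f v) ∩ Set.range f = f '' closedNbhd F.graph v) ∧
    (F.mark v = Mark.part → f '' closedNbhd F.graph v ⊆ closedNbhd G (f v))

/-!
Given copies of `F₁ ∈ 𝓕₁` and `F₂ ∈ 𝓕₂` in `G`, the subgraph of `G` induced on the union of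
the two copies, with a vertex marked full when its whole closed neighbourhood lies in the union
and semifull otherwise, embeds in `G`, and both `F₁` and `F₂` embed in it as marked graphs. So
`𝓕` can be taken to be all marked graphs on at most `M` vertices, where `M` bounds every
`|F₁| + |F₂|`, into which a member of `𝓕₁` and a member of `𝓕₂` embed; since marked
embeddings compose, a graph containing a member of `𝓕` contains members of both `𝓕₁` and `𝓕₂`.
-/

instance : Fintype Mark :=
  ⟨{.full, .semifull, .part}, fun m => by cases m <;> decide⟩

instance {V : Type*} [Finite V] : Finite (MarkedGraph V) :=
  Finite.of_injective (fun F => (F.graph, F.mark)) fun F F' h => by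
    cases F; cases F'; cases h; rfl

/-- Marks may only get stronger along `g`; this is what makes these compose with
`IsMarkedEmbedding`. -/
def IsMarkedGraphEmbedding {W V : Type*} (F : MarkedGraph W) (H : MarkedGraph V) (g : W → V) :
    Prop :=
  Function.Injective g ∧ ∀ v : W,
    (F.mark v = Mark.full → H.mark (g v) = Mark.full ∧
      closedNbhd H.graph (g v) = g '' closedNbhd F.graph v) ∧
    (F.mark v = Mark.semifull → H.mark (g v) ≠ Mark.part ∧
      closedNbhd H.graph (g v) ∩ Set.range g = g '' closedNbhd F.graph v) ∧
    (F.mark v = Mark.part → g '' closedNbhd F.graph v ⊆ closedNbhd H.graph (g v))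

namespace MarkedGraph

def ofGraph {V : Type*} (G : SimpleGraph V) : MarkedGraph V :=
  ⟨G, fun _ => Mark.full⟩

def ContainsSome {W ι : Type*} {U : ι → Type*} (H : MarkedGraph W)
    (F : ∀ i, MarkedGraph (U i)) : Prop :=
  ∃ i g, IsMarkedGraphEmbedding (F i) H g

end MarkedGraph

def IsFree {ι V : Type*} {U : ι → Type*} (F : ∀ i, MarkedGraph (U i)) (G : SimpleGraph V) :
    Prop :=
  ∀ i f, ¬ IsMarkedEmbedding (F i) G f

lemma isMarkedEmbedding_iff_ofGraph {W V : Type*} {F : MarkedGraph W} {G : SimpleGraph V}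
    {f : W → V} :
    IsMarkedEmbedding F G f ↔ IsMarkedGraphEmbedding F (MarkedGraph.ofGraph G) f := by
  simp [IsMarkedEmbedding, IsMarkedGraphEmbedding, MarkedGraph.ofGraph]

namespace IsMarkedGraphEmbedding

variable {A W V : Type*} {F₀ : MarkedGraph A} {F : MarkedGraph W} {H : MarkedGraph V}
  {g : A → W} {f : W → V}

lemma image_closedNbhd_subset (hf : IsMarkedGraphEmbedding F H f) (w : W) :
    f '' closedNbhd F.graph w ⊆ closedNbhd H.graph (f w) := by
  obtain ⟨hfull, hsemi, hpart⟩ := hf.2 w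
  cases hm : F.mark w with
  | full => exact (hfull hm).2.symm.subset
  | semifull => exact (hsemi hm).2.symm.subset.trans Set.inter_subset_left
  | part => exact hpart hm

lemma closedNbhd_inter_image (hf : IsMarkedGraphEmbedding F H f) {w : W}
    (hw : F.mark w ≠ Mark.part) (T : Set W) :
    closedNbhd H.graph (f w) ∩ f '' T = f '' (closedNbhd F.graph w ∩ T) := by
  rw [Set.image_inter hf.1]
  cases hm : F.mark w with
  | full => rw [((hf.2 w).1 hm).2]
  | semifull =>
    rw [← ((hf.2 w).2.1 hm).2, Set.inter_assoc,
      Set.inter_eq_right.mpr (Set.image_subset_range f T)]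
  | part => exact absurd hm hw

lemma comp (hg : IsMarkedGraphEmbedding F₀ F g) (hf : IsMarkedGraphEmbedding F H f) :
    IsMarkedGraphEmbedding F₀ H (f ∘ g) := by
  refine ⟨hf.1.comp hg.1, fun v => ⟨fun hm => ?_, fun hm => ?_, fun hm => ?_⟩⟩
  · obtain ⟨hgv, hN⟩ := (hg.2 v).1 hm
    obtain ⟨hfgv, hN'⟩ := (hf.2 (g v)).1 hgv
    exact ⟨hfgv, by rw [Function.comp_apply, hN', hN, Set.image_comp]⟩
  · obtain ⟨hgv, hN⟩ := (hg.2 v).2.1 hm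
    refine ⟨?_, ?_⟩
    · cases hm' : F.mark (g v) with
      | full => simp [((hf.2 (g v)).1 hm').1]
      | semifull => exact ((hf.2 (g v)).2.1 hm').1
      | part => exact absurd hm' hgv
    · rw [Function.comp_apply, Set.range_comp, hf.closedNbhd_inter_image hgv, hN,
        Set.image_comp]
  · rw [Set.image_comp]
    exact (Set.image_mono ((hg.2 v).2.2 hm)).trans (hf.image_closedNbhd_subset (g v))

lemma of_iso (φ : F.graph ≃g H.graph) (hmark : ∀ w, H.mark (φ w) = F.mark w) :
    IsMarkedGraphEmbedding F H φ := by
  have hN : ∀ w, closedNbhd H.graph (φ w) = φ '' closedNbhd F.graph w := fun w => by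
    ext u
    obtain ⟨u, rfl⟩ := φ.surjective u
    simp [closedNbhd, φ.injective.eq_iff, φ.map_adj_iff, eq_comm]
  refine ⟨φ.injective, fun w => ⟨fun hm => ⟨by rw [hmark, hm], hN w⟩, fun hm => ⟨?_, ?_⟩,
    fun _ => (hN w).symm.subset⟩⟩
  · rw [hmark, hm]
    decide
  · rw [φ.surjective.range_eq, Set.inter_univ, hN w]

end IsMarkedGraphEmbedding

lemma IsMarkedEmbedding.comp {A W V : Type*} {F₀ : MarkedGraph A} {F : MarkedGraph W}
    {G : SimpleGraph V} {g : A → W} {f : W → V} (hf : IsMarkedEmbedding F G f)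
    (hg : IsMarkedGraphEmbedding F₀ F g) : IsMarkedEmbedding F₀ G (f ∘ g) :=
  isMarkedEmbedding_iff_ofGraph.2 (hg.comp (isMarkedEmbedding_iff_ofGraph.1 hf))

lemma IsFree.not_isMarkedEmbedding {ι W V : Type*} {U : ι → Type*}
    {F : ∀ i, MarkedGraph (U i)} {G : SimpleGraph V} (hF : IsFree F G) {H : MarkedGraph W}
    (hH : H.ContainsSome F) (h : W → V) : ¬ IsMarkedEmbedding H G h := by
  obtain ⟨i, g, hg⟩ := hH
  exact fun hh => hF i _ (hh.comp hg)

lemma MarkedGraph.exists_fin_equiv {W : Type*} [Finite W] (H : MarkedGraph W) :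
    ∃ (H' : MarkedGraph (Fin (Nat.card W))) (e : Fin (Nat.card W) ≃ W),
      IsMarkedGraphEmbedding H' H e ∧ IsMarkedGraphEmbedding H H' e.symm := by
  let e := (Finite.equivFin W).symm
  let φ := SimpleGraph.Iso.comap e H.graph
  let H' : MarkedGraph (Fin (Nat.card W)) := ⟨H.graph.comap e, H.mark ∘ e⟩
  refine ⟨H', e, IsMarkedGraphEmbedding.of_iso (F := H') (H := H) φ fun _ => rfl,
    IsMarkedGraphEmbedding.of_iso (F := H) (H := H') φ.symm fun w => ?_⟩
  change H.mark (e (e.symm w)) = H.mark w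
  rw [e.apply_symm_apply]

section Induce

variable {W V : Type*} (G : SimpleGraph V) (S : Set V)

open Classical in
noncomputable def MarkedGraph.induce : MarkedGraph S :=
  ⟨G.induce S, fun w => if closedNbhd G w ⊆ S then Mark.full else Mark.semifull⟩

variable {G S}

lemma MarkedGraph.induce_graph : (MarkedGraph.induce G S).graph = G.induce S :=
  rfl

lemma MarkedGraph.induce_mark_ne_part (w : S) : (MarkedGraph.induce G S).mark w ≠ Mark.part := by
  simp only [MarkedGraph.induce]
  split <;> decide

lemma MarkedGraph.closedNbhd_subset_of_induce_mark_eq_full {w : S}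
    (hw : (MarkedGraph.induce G S).mark w = Mark.full) : closedNbhd G w ⊆ S := by
  by_contra h
  simp [MarkedGraph.induce, h] at hw

lemma image_val_closedNbhd_induce (w : S) :
    Subtype.val '' closedNbhd (G.induce S) w = closedNbhd G w ∩ S := by
  ext u
  constructor
  · rintro ⟨x, hx | hx, rfl⟩
    · rw [hx]
      exact ⟨Set.mem_insert _ _, w.2⟩
    · exact ⟨Set.mem_insert_of_mem _ hx, x.2⟩
  · rintro ⟨hu | hu, huS⟩
    · exact ⟨⟨u, huS⟩, Or.inl (Subtype.ext hu), rfl⟩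
    · exact ⟨⟨u, huS⟩, Or.inr hu, rfl⟩

lemma isMarkedEmbedding_induce_val : IsMarkedEmbedding (MarkedGraph.induce G S) G Subtype.val := by
  refine ⟨Subtype.val_injective, fun w => ⟨fun hm => ?_, fun _ => ?_, fun _ => ?_⟩⟩
  · rw [MarkedGraph.induce_graph, image_val_closedNbhd_induce,
      Set.inter_eq_left.mpr (MarkedGraph.closedNbhd_subset_of_induce_mark_eq_full hm)]
  · rw [MarkedGraph.induce_graph, image_val_closedNbhd_induce, Subtype.range_val]
  · rw [MarkedGraph.induce_graph, image_val_closedNbhd_induce]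
    exact Set.inter_subset_left

lemma IsMarkedEmbedding.codRestrict {F : MarkedGraph W} {f : W → V}
    (hf : IsMarkedEmbedding F G f) (hS : ∀ w, f w ∈ S) :
    IsMarkedGraphEmbedding F (MarkedGraph.induce G S) (Set.codRestrict f S hS) := by
  set g := Set.codRestrict f S hS
  have himage : ∀ T : Set W, Subtype.val '' (g '' T) = f '' T := fun T => by
    rw [← Set.image_comp]
    rfl
  have hrange : Set.range f ⊆ S := Set.range_subset_iff.2 hS
  have hval := Set.image_injective.2 (Subtype.val_injective (p := (· ∈ S)))
  refine ⟨(Set.injective_codRestrict hS).2 hf.1,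
    fun v => ⟨fun hm => ?_, fun hm => ?_, fun hm => ?_⟩⟩
  · have hN := (hf.2 v).1 hm
    have hsub : closedNbhd G (f v) ⊆ S := hN ▸ (Set.image_subset_range f _).trans hrange
    refine ⟨by simp [MarkedGraph.induce, g, hsub], hval ?_⟩
    change Subtype.val '' closedNbhd (G.induce S) (g v) = _
    rw [image_val_closedNbhd_induce, Set.val_codRestrict_apply, himage,
      Set.inter_eq_left.2 hsub, hN]
  · refine ⟨MarkedGraph.induce_mark_ne_part _, hval ?_⟩
    change Subtype.val '' (closedNbhd (G.induce S) (g v) ∩ Set.range g) = _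
    rw [Set.image_inter Subtype.val_injective, image_val_closedNbhd_induce, ← Set.image_univ,
      himage, Set.image_univ, Set.inter_assoc, Set.inter_eq_right.2 hrange, himage]
    exact (hf.2 v).2.1 hm
  · rw [← Set.image_subset_image_iff Subtype.val_injective, himage]
    change _ ⊆ Subtype.val '' closedNbhd (G.induce S) (g v)
    rw [image_val_closedNbhd_induce]
    exact Set.subset_inter ((hf.2 v).2.2 hm) ((Set.image_subset_range f _).trans hrange)

end Induce

lemma exists_common_extension {W₁ W₂ V : Type*} [Finite W₁] [Finite W₂]
    {F₁ : MarkedGraph W₁} {F₂ : MarkedGraph W₂} {G : SimpleGraph V} {f₁ : W₁ → V}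
    {f₂ : W₂ → V} (hf₁ : IsMarkedEmbedding F₁ G f₁) (hf₂ : IsMarkedEmbedding F₂ G f₂) :
    ∃ (m : ℕ) (H : MarkedGraph (Fin m)) (h : Fin m → V), m ≤ Nat.card W₁ + Nat.card W₂ ∧
      (∃ g₁, IsMarkedGraphEmbedding F₁ H g₁) ∧ (∃ g₂, IsMarkedGraphEmbedding F₂ H g₂) ∧
      IsMarkedEmbedding H G h := by
  set S := Set.range f₁ ∪ Set.range f₂
  obtain ⟨H, e, he, he'⟩ := (MarkedGraph.induce G S).exists_fin_equiv
  refine ⟨_, H, Subtype.val ∘ e, ?_,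
    ⟨_, (hf₁.codRestrict fun w => Or.inl ⟨w, rfl⟩).comp he'⟩,
    ⟨_, (hf₂.codRestrict fun w => Or.inr ⟨w, rfl⟩).comp he'⟩,
    isMarkedEmbedding_induce_val.comp he⟩
  calc Nat.card S ≤ Nat.card (Set.range f₁) + Nat.card (Set.range f₂) := Set.card_union_le _ _
    _ ≤ Nat.card W₁ + Nat.card W₂ :=
      add_le_add (Finite.card_range_le f₁) (Finite.card_range_le f₂)

abbrev CommonExtension {ι₁ ι₂ : Type*} {U₁ : ι₁ → Type*} {U₂ : ι₂ → Type*}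
    (F₁ : ∀ i, MarkedGraph (U₁ i)) (F₂ : ∀ j, MarkedGraph (U₂ j)) (M : ℕ) :=
  {H : Σ m : Fin (M + 1), MarkedGraph (Fin m) // H.2.ContainsSome F₁ ∧ H.2.ContainsSome F₂}

def commonExtensions {ι₁ ι₂ : Type*} {U₁ : ι₁ → Type*} {U₂ : ι₂ → Type*}
    (F₁ : ∀ i, MarkedGraph (U₁ i)) (F₂ : ∀ j, MarkedGraph (U₂ j)) (M : ℕ)
    (H : CommonExtension F₁ F₂ M) : MarkedGraph (Fin H.1.1) :=
  H.1.2

lemma isFree_commonExtensions_iff {ι₁ ι₂ V : Type*} {U₁ : ι₁ → Type*} {U₂ : ι₂ → Type*}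
    [∀ i, Finite (U₁ i)] [∀ j, Finite (U₂ j)] (F₁ : ∀ i, MarkedGraph (U₁ i))
    (F₂ : ∀ j, MarkedGraph (U₂ j)) {M : ℕ} (hM : ∀ i j, Nat.card (U₁ i) + Nat.card (U₂ j) ≤ M)
    (G : SimpleGraph V) :
    IsFree (commonExtensions F₁ F₂ M) G ↔ IsFree F₁ G ∨ IsFree F₂ G := by
  constructor
  · intro hfree
    by_contra hcon
    simp only [IsFree, not_or, not_forall, not_not] at hcon
    obtain ⟨⟨i, f₁, hf₁⟩, j, f₂, hf₂⟩ := hcon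
    obtain ⟨m, H, h, hm, hH₁, hH₂, hh⟩ := exists_common_extension hf₁ hf₂
    let H' : CommonExtension F₁ F₂ M :=
      ⟨⟨⟨m, Nat.lt_succ_of_le (hm.trans (hM i j))⟩, H⟩, ⟨i, hH₁⟩, ⟨j, hH₂⟩⟩
    exact hfree H' h hh
  · rintro (hfree | hfree) ⟨_, hH₁, hH₂⟩
    · exact hfree.not_isMarkedEmbedding hH₁
    · exact hfree.not_isMarkedEmbedding hH₂

lemma exists_fin_isFree_iff {ι : Type*} [Finite ι] {U : ι → Type} [∀ i, Fintype (U i)]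
    (F : ∀ i, MarkedGraph (U i)) :
    ∃ (n : ℕ) (U' : Fin n → Type) (_ : ∀ k, Fintype (U' k)) (F' : ∀ k, MarkedGraph (U' k)),
      ∀ (V : Type) (G : SimpleGraph V), IsFree F' G ↔ IsFree F G := by
  let e := (Finite.equivFin ι).symm
  exact ⟨_, fun k => U (e k), fun k => inferInstance, fun k => F (e k),
    fun V G => (e.surjective.forall (p := fun i => ∀ f, ¬ IsMarkedEmbedding (F i) G f)).symm⟩

/-- Claim 3.6: for finite sets `𝓕₁, 𝓕₂` of (finite) marked graphs
there is a finite set `𝓕` of marked graphs such that a graph is `𝓕`-free iff it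
is `𝓕₁`-free or `𝓕₂`-free. -/
theorem stmt9 (n₁ n₂ : ℕ) (U₁ : Fin n₁ → Type) (U₂ : Fin n₂ → Type)
    [∀ i, Fintype (U₁ i)] [∀ i, Fintype (U₂ i)]
    (F₁ : ∀ i, MarkedGraph (U₁ i)) (F₂ : ∀ i, MarkedGraph (U₂ i)) :
    ∃ (n : ℕ) (U : Fin n → Type) (_ : ∀ i, Fintype (U i)) (F : ∀ i, MarkedGraph (U i)),
      ∀ (V : Type) (G : SimpleGraph V),
        (∀ i (f : U i → V), ¬ IsMarkedEmbedding (F i) G f) ↔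
        ((∀ i (f : U₁ i → V), ¬ IsMarkedEmbedding (F₁ i) G f) ∨
         (∀ i (f : U₂ i → V), ¬ IsMarkedEmbedding (F₂ i) G f)) := by
  let M := ∑ i, Nat.card (U₁ i) + ∑ j, Nat.card (U₂ j)
  have hM : ∀ i j, Nat.card (U₁ i) + Nat.card (U₂ j) ≤ M := fun i j =>
    add_le_add (Finset.single_le_sum (f := fun i => Nat.card (U₁ i)) (fun _ _ => Nat.zero_le _)
      (Finset.mem_univ i))
      (Finset.single_le_sum (f := fun j => Nat.card (U₂ j)) (fun _ _ => Nat.zero_le _)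
      (Finset.mem_univ j))
  obtain ⟨n, U, hU, F, hF⟩ := exists_fin_isFree_iff (commonExtensions F₁ F₂ M)
  exact ⟨n, U, hU, F, fun V G => (hF V G).trans (isFree_commonExtensions_iff F₁ F₂ hM G)⟩
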